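/- Let (X,d) be an unbounded metric space and let r̃ be a scaling sequence. Then the weighted shortest-path pseudometric d*_{ρ_X} on the vertex set of the weighted cluster graph G_{X,r̃}(ρ_X) is in fact a metric, and G_{X,r̃}(ρ_X) is metrizable by d*_{ρ_X}, i.e., d*_{ρ_X}(u,v)=ρ_X({u,v}) holds for every edge {u,v} of G_{X,r̃}. -/

import Mathlib

open Filter Topology
open scoped Classical

/-- An unbounded metric space. -/
def UnboundedSpace (X : Type*) [MetricSpace X] : Prop :=
  ¬ Bornology.IsBounded (Set.univ : Set X)

/-- A scaling sequence: positive reals tending to infinity. -/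
def ScalingSeq (r : ℕ → ℝ) : Prop :=
  (∀ n, 0 < r n) ∧ Filter.Tendsto r Filter.atTop Filter.atTop

/-- Two sequences are mutually stable w.r.t. `r` if `d(x_n, y_n)/r_n` has a finite limit. -/
def MutuallyStable {X : Type*} [MetricSpace X] (r : ℕ → ℝ) (x y : ℕ → X) : Prop :=
  ∃ L : ℝ, Filter.Tendsto (fun n => dist (x n) (y n) / r n) Filter.atTop (nhds L)

/-- `Seq(X, r̃)`: sequences going to infinity such that `d(x_n, p)/r_n` has a finite limit. -/
def SeqInf {X : Type*} [MetricSpace X] (r : ℕ → ℝ) (p : X) : Set (ℕ → X) :=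
  {x | Filter.Tendsto (fun n => dist (x n) p) Filter.atTop Filter.atTop ∧
    ∃ L : ℝ, Filter.Tendsto (fun n => dist (x n) p / r n) Filter.atTop (nhds L)}

/-- The relation `x̃ ≡ ỹ`, i.e. `d(x_n, y_n)/r_n → 0`. -/
def EquivSeq {X : Type*} [MetricSpace X] (r : ℕ → ℝ) (x y : ℕ → X) : Prop :=
  Filter.Tendsto (fun n => dist (x n) (y n) / r n) Filter.atTop (nhds 0)

/-- The `≡`-equivalence class of `x` inside `Seq(X, r̃)`. -/
def classOf {X : Type*} [MetricSpace X] (r : ℕ → ℝ) (p : X) (x : ℕ → X) : Set (ℕ → X) :=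
  {y | y ∈ SeqInf r p ∧ EquivSeq r x y}

/-- The vertex set of the cluster graph `G_{X, r̃}`: all `≡`-classes of `Seq(X, r̃)`. -/
def VertexSet {X : Type*} [MetricSpace X] (r : ℕ → ℝ) (p : X) : Set (Set (ℕ → X)) :=
  {v | ∃ x ∈ SeqInf r p, v = classOf r p x}

/-- Adjacency in the cluster graph `G_{X, r̃}`: distinct classes whose representatives
are mutually stable. -/
def AdjacentCl {X : Type*} [MetricSpace X] (r : ℕ → ℝ) (p : X) (u v : Set (ℕ → X)) : Prop :=
  u ∈ VertexSet r p ∧ v ∈ VertexSet r p ∧ u ≠ v ∧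
    ∀ x ∈ u, ∀ y ∈ v, MutuallyStable r x y

/-- The weight `ρ_X` on the cluster graph: for an edge `{u,v}` it is the (unique) limit
`lim d(x_n, y_n)/r_n` for representatives. -/
noncomputable def rhoX {X : Type*} [MetricSpace X] (r : ℕ → ℝ) (u v : Set (ℕ → X)) : ℝ :=
  sSup {L : ℝ | ∃ x ∈ u, ∃ y ∈ v,
    Filter.Tendsto (fun n => dist (x n) (y n) / r n) Filter.atTop (nhds L)}

/-- The root `ν₀ = X̃⁰_{∞,r̃}`: sequences with `d(z_n,p) → ∞` and `d(z_n,p)/r_n → 0`. -/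
def rootClass {X : Type*} [MetricSpace X] (r : ℕ → ℝ) (p : X) : Set (ℕ → X) :=
  {z | Filter.Tendsto (fun n => dist (z n) p) Filter.atTop Filter.atTop ∧
    Filter.Tendsto (fun n => dist (z n) p / r n) Filter.atTop (nhds 0)}

/-- The labeling `ρ⁰` of vertices: `ρ⁰(v) = lim d(x_n,p)/r_n` for `x̃ ∈ v`. -/
noncomputable def rho0 {X : Type*} [MetricSpace X] (r : ℕ → ℝ) (p : X)
    (v : Set (ℕ → X)) : ℝ :=
  sSup {L : ℝ | ∃ x ∈ v, Filter.Tendsto (fun n => dist (x n) p / r n) Filter.atTop (nhds L)}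

/-- A self-stable family: a subset of `Seq(X, r̃)` any two of whose members are
mutually stable. -/
def SelfStable {X : Type*} [MetricSpace X] (r : ℕ → ℝ) (p : X) (F : Set (ℕ → X)) : Prop :=
  F ⊆ SeqInf r p ∧ ∀ x ∈ F, ∀ y ∈ F, MutuallyStable r x y

/-- A maximal self-stable set `X̃_{∞, r̃}`. -/
def MaxSelfStable {X : Type*} [MetricSpace X] (r : ℕ → ℝ) (p : X) (F : Set (ℕ → X)) : Prop :=
  SelfStable r p F ∧ ∀ F', SelfStable r p F' → F ⊆ F' → F = F'

/-- The pretangent space `Ω^X_{∞,r̃}` attached to a maximal self-stable set `F`: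
the set of `≡`-classes of members of `F`. -/
def PretangentCl {X : Type*} [MetricSpace X] (r : ℕ → ℝ) (F : Set (ℕ → X)) :
    Set (Set (ℕ → X)) :=
  {v | ∃ x ∈ F, v = {y | y ∈ F ∧ EquivSeq r x y}}

/-- A clique in the cluster graph `G_{X, r̃}`. -/
def IsCliqueCl {X : Type*} [MetricSpace X] (r : ℕ → ℝ) (p : X)
    (C : Set (Set (ℕ → X))) : Prop :=
  C ⊆ VertexSet r p ∧ ∀ u ∈ C, ∀ v ∈ C, u ≠ v → AdjacentCl r p u v

/-- The set of weights of paths joining `u` and `v` in the graph given by the adjacency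
relation `adj`, with edge weight `w`. -/
def PathWeights {V : Type*} (adj : V → V → Prop) (w : V → V → ℝ) (u v : V) : Set ℝ :=
  {s | ∃ n : ℕ, ∃ f : Fin (n + 1) → V, f 0 = u ∧ f (Fin.last n) = v ∧
    Function.Injective f ∧ (∀ i : Fin n, adj (f i.castSucc) (f i.succ)) ∧
    s = ∑ i : Fin n, w (f i.castSucc) (f i.succ)}

/-- The weighted shortest-path pseudometric `d*_w`. -/
noncomputable def spDist {V : Type*} (adj : V → V → Prop) (w : V → V → ℝ) (u v : V) : ℝ :=
  if u = v then 0 else sInf (PathWeights adj w u v)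


/-!
Fix representatives `x̃ ∈ u`, `ỹ ∈ v`. Along a walk `u = v₀, …, v_k = v` of the cluster graph,
the triangle inequality through representatives of the `vᵢ` bounds `d(x_n, y_n)/r_n` by a sum
that converges to the weight of the walk. So `d(x_n, y_n)/r_n` is eventually below any
`c > d*(u, v)`: on an edge this gives `ρ_X(u, v) ≤ d*(u, v)` (the edge itself is a path, giving
`≥`), and `d*(u, v) = 0` forces `x̃ ≡ ỹ`, i.e. `u = v`. Symmetry and the triangle inequality
hold for shortest-path distances in any graph with nonnegative symmetric weights, once any two
vertices are joined by a walk (erasing loops turns walks into paths); here the root `ν₀` joins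
all vertices, and it exists because `X` is unbounded.
-/

namespace SimpleGraph.Walk

variable {V : Type*} {G : SimpleGraph V} {w : V → V → ℝ} {u v z : V}

def weight (w : V → V → ℝ) (q : G.Walk u v) : ℝ :=
  (q.darts.map fun d => w d.fst d.snd).sum

@[simp]
theorem weight_nil : (nil : G.Walk u u).weight w = 0 := rfl

@[simp]
theorem weight_cons (h : G.Adj u v) (q : G.Walk v z) :
    (cons h q).weight w = w u v + q.weight w := by
  simp [weight]

theorem weight_append (q : G.Walk u v) (q' : G.Walk v z) :
    (q.append q').weight w = q.weight w + q'.weight w := by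
  simp [weight, darts_append]

theorem weight_reverse (hw : ∀ a b, w a b = w b a) (q : G.Walk u v) :
    q.reverse.weight w = q.weight w := by
  simp [weight, darts_reverse, List.sum_reverse, Function.comp_def, hw]

theorem weight_nonneg (hw : ∀ a b, G.Adj a b → 0 ≤ w a b) (q : G.Walk u v) :
    0 ≤ q.weight w :=
  List.sum_nonneg fun _ hd => by
    obtain ⟨d, -, rfl⟩ := List.mem_map.1 hd
    exact hw _ _ d.adj

theorem weight_bypass_le [DecidableEq V] (hw : ∀ a b, G.Adj a b → 0 ≤ w a b)
    (q : G.Walk u v) : q.bypass.weight w ≤ q.weight w :=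
  (q.darts_bypass_sublist_darts.map _).sum_le_sum fun _ hd => by
    obtain ⟨d, -, rfl⟩ := List.mem_map.1 hd
    exact hw _ _ d.adj

theorem weight_eq_sum_getVert (q : G.Walk u v) :
    q.weight w = ∑ i ∈ Finset.range q.length, w (q.getVert i) (q.getVert (i + 1)) := by
  induction q with
  | nil => simp
  | cons h q ih =>
    rw [weight_cons, ih, length_cons, Finset.sum_range_succ', add_comm]
    simp [getVert_cons_succ]

end SimpleGraph.Walk

section ShortestPath

open SimpleGraph

variable {V : Type*} {G : SimpleGraph V} {w : V → V → ℝ} {u v z : V}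

theorem SimpleGraph.Walk.IsPath.weight_mem_pathWeights {q : G.Walk u v} (hq : q.IsPath) :
    q.weight w ∈ PathWeights G.Adj w u v := by
  refine ⟨q.length, fun i => q.getVert i, by simp, by simp, fun i j hij => ?_,
    fun i => q.adj_getVert_succ i.isLt, ?_⟩
  · exact Fin.ext (hq.getVert_injOn (Nat.lt_succ_iff.1 i.isLt) (Nat.lt_succ_iff.1 j.isLt) hij)
  · rw [q.weight_eq_sum_getVert, ← Fin.sum_univ_eq_sum_range]
    rfl

theorem exists_isPath_of_mem_pathWeights {s : ℝ} (hs : s ∈ PathWeights G.Adj w u v) :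
    ∃ q : G.Walk u v, q.IsPath ∧ q.weight w = s := by
  obtain ⟨n, f, hu, hv, hinj, hadj, rfl⟩ := hs
  have hchain : (List.ofFn f).IsChain G.Adj :=
    List.isChain_ofFn.2 fun i hi => hadj ⟨i, Nat.succ_lt_succ_iff.1 hi⟩
  have hne : List.ofFn f ≠ [] := by simp
  let q : G.Walk u v := (Walk.ofSupport _ hne hchain).copy
    (by rw [List.head_ofFn, ← hu]; rfl) (by rw [List.getLast_ofFn, ← hv]; rfl)
  have hlen : q.length = n := by simp [q]
  have hq : ∀ i (hi : i ≤ n), q.getVert i = f ⟨i, Nat.lt_succ_of_le hi⟩ := by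
    intro i hi
    rw [Walk.getVert_eq_support_getElem _ (hlen ▸ hi)]
    simp only [q, Walk.support_copy, Walk.support_ofSupport, List.getElem_ofFn]
  refine ⟨q, ?_, ?_⟩
  · rw [Walk.isPath_copy, Walk.isPath_def, Walk.support_ofSupport, List.nodup_ofFn]
    exact hinj
  · rw [Walk.weight_eq_sum_getVert, hlen,
      ← Fin.sum_univ_eq_sum_range (fun i => w (q.getVert i) (q.getVert (i + 1)))]
    refine Finset.sum_congr rfl fun i _ => ?_
    rw [hq i i.isLt.le, hq (i + 1) i.isLt]
    rfl

theorem spDist_self (adj : V → V → Prop) (w : V → V → ℝ) (u : V) : spDist adj w u u = 0 :=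
  if_pos rfl

theorem pathWeights_bddBelow {adj : V → V → Prop} (hw : ∀ a b, adj a b → 0 ≤ w a b) :
    BddBelow (PathWeights adj w u v) := by
  refine ⟨0, ?_⟩
  rintro _ ⟨n, f, -, -, -, hadj, rfl⟩
  exact Finset.sum_nonneg fun i _ => hw _ _ (hadj i)

theorem spDist_le_weight (hw : ∀ a b, G.Adj a b → 0 ≤ w a b) (q : G.Walk u v) :
    spDist G.Adj w u v ≤ q.weight w := by
  by_cases huv : u = v
  · subst huv
    rw [spDist_self]
    exact q.weight_nonneg hw
  · rw [spDist, if_neg huv]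
    exact (csInf_le (pathWeights_bddBelow hw) q.bypass_isPath.weight_mem_pathWeights).trans
      (q.weight_bypass_le hw)

theorem SimpleGraph.Reachable.exists_weight_lt (h : G.Reachable u v) {c : ℝ}
    (hc : spDist G.Adj w u v < c) : ∃ q : G.Walk u v, q.weight w < c := by
  by_cases huv : u = v
  · subst huv
    exact ⟨.nil, by rwa [spDist_self] at hc⟩
  · rw [spDist, if_neg huv] at hc
    obtain ⟨q₀⟩ := h
    obtain ⟨s, hs, hsc⟩ :=
      exists_lt_of_csInf_lt ⟨_, q₀.bypass_isPath.weight_mem_pathWeights⟩ hc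
    obtain ⟨q, -, rfl⟩ := exists_isPath_of_mem_pathWeights hs
    exact ⟨q, hsc⟩

theorem spDist_comm (hw : ∀ a b, G.Adj a b → 0 ≤ w a b) (hsymm : ∀ a b, w a b = w b a)
    (h : G.Reachable u v) : spDist G.Adj w u v = spDist G.Adj w v u := by
  have key : ∀ {a b : V}, G.Reachable b a → spDist G.Adj w a b ≤ spDist G.Adj w b a :=
    fun hba => le_of_forall_gt fun c hc => by
      obtain ⟨q, hq⟩ := hba.exists_weight_lt hc
      exact (spDist_le_weight hw q.reverse).trans_lt (by rwa [q.weight_reverse hsymm])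
  exact le_antisymm (key h.symm) (key h)

theorem spDist_triangle (hw : ∀ a b, G.Adj a b → 0 ≤ w a b) (huv : G.Reachable u v)
    (hvz : G.Reachable v z) :
    spDist G.Adj w u z ≤ spDist G.Adj w u v + spDist G.Adj w v z := by
  refine le_of_forall_pos_lt_add fun ε hε => ?_
  obtain ⟨q, hq⟩ := huv.exists_weight_lt (w := w) (lt_add_of_pos_right _ (half_pos hε))
  obtain ⟨q', hq'⟩ := hvz.exists_weight_lt (w := w) (lt_add_of_pos_right _ (half_pos hε))
  calc spDist G.Adj w u z ≤ (q.append q').weight w := spDist_le_weight hw _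
    _ = q.weight w + q'.weight w := q.weight_append q'
    _ < _ := by linarith

end ShortestPath

section ScaledSequences

variable {X : Type*} [MetricSpace X] {r : ℕ → ℝ}

theorem tendsto_dist_div_of_equivSeq {x y x' y' : ℕ → X} {L : ℝ}
    (h : Tendsto (fun n => dist (x n) (y n) / r n) atTop (𝓝 L))
    (hx : EquivSeq r x x') (hy : EquivSeq r y y') :
    Tendsto (fun n => dist (x' n) (y' n) / r n) atTop (𝓝 L) := by
  have hbound : ∀ n, dist (dist (x n) (y n) / r n) (dist (x' n) (y' n) / r n) ≤
      |dist (x n) (x' n) / r n| + |dist (y n) (y' n) / r n| := fun n => by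
    rw [Real.dist_eq, ← sub_div, abs_div, abs_div, abs_div, abs_dist, abs_dist, ← add_div,
      ← Real.dist_eq]
    exact div_le_div_of_nonneg_right (dist_dist_dist_le _ _ _ _) (abs_nonneg _)
  refine tendsto_of_tendsto_of_dist h (squeeze_zero (fun _ => dist_nonneg) hbound ?_)
  simpa using hx.abs.add hy.abs

theorem EquivSeq.refl (r : ℕ → ℝ) (x : ℕ → X) : EquivSeq r x x := by
  simp [EquivSeq]

theorem EquivSeq.symm {x y : ℕ → X} (h : EquivSeq r x y) : EquivSeq r y x := by
  simpa [EquivSeq, dist_comm] using h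

theorem EquivSeq.trans {x y z : ℕ → X} (hxy : EquivSeq r x y) (hyz : EquivSeq r y z) :
    EquivSeq r x z :=
  tendsto_dist_div_of_equivSeq hxy (.refl r x) hyz

end ScaledSequences

section ClusterGraph

variable {X : Type*} [MetricSpace X] {r : ℕ → ℝ} {p : X} {u v : Set (ℕ → X)} {x y : ℕ → X}

theorem mem_classOf_self (hx : x ∈ SeqInf r p) : x ∈ classOf r p x :=
  ⟨hx, .refl r x⟩

theorem nonempty_of_mem_vertexSet (hu : u ∈ VertexSet r p) : u.Nonempty := by
  obtain ⟨x, hx, rfl⟩ := hu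
  exact ⟨x, mem_classOf_self hx⟩

theorem equivSeq_of_mem_vertexSet (hu : u ∈ VertexSet r p) (hx : x ∈ u) (hy : y ∈ u) :
    EquivSeq r x y := by
  obtain ⟨a, -, rfl⟩ := hu
  exact hx.2.symm.trans hy.2

theorem eq_of_equivSeq (hu : u ∈ VertexSet r p) (hv : v ∈ VertexSet r p) (hx : x ∈ u)
    (hy : y ∈ v) (h : EquivSeq r x y) : u = v := by
  obtain ⟨a, -, rfl⟩ := hu
  obtain ⟨b, -, rfl⟩ := hv
  have hab : EquivSeq r a b := (hx.2.trans h).trans hy.2.symm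
  ext z
  exact ⟨fun hz => ⟨hz.1, hab.symm.trans hz.2⟩, fun hz => ⟨hz.1, hab.trans hz.2⟩⟩

theorem AdjacentCl.symm (h : AdjacentCl r p u v) : AdjacentCl r p v u := by
  obtain ⟨hu, hv, hne, hstable⟩ := h
  refine ⟨hv, hu, hne.symm, fun y hy x hx => ?_⟩
  obtain ⟨L, hL⟩ := hstable x hx y hy
  exact ⟨L, by simpa [dist_comm] using hL⟩

def clusterGraph (r : ℕ → ℝ) (p : X) : SimpleGraph (Set (ℕ → X)) where
  Adj := AdjacentCl r p
  symm := ⟨fun _ _ => AdjacentCl.symm⟩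
  loopless := ⟨fun _ h => h.2.2.1 rfl⟩

theorem tendsto_rhoX (h : AdjacentCl r p u v) (hx : x ∈ u) (hy : y ∈ v) :
    Tendsto (fun n => dist (x n) (y n) / r n) atTop (𝓝 (rhoX r u v)) := by
  obtain ⟨hu, hv, -, hstable⟩ := h
  obtain ⟨L, hL⟩ := hstable x hx y hy
  have hlimits : {L' : ℝ | ∃ a ∈ u, ∃ b ∈ v,
      Tendsto (fun n => dist (a n) (b n) / r n) atTop (𝓝 L')} = {L} := by
    refine Set.eq_singleton_iff_unique_mem.2 ⟨⟨x, hx, y, hy, hL⟩, ?_⟩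
    rintro L' ⟨a, ha, b, hb, hab⟩
    exact tendsto_nhds_unique (tendsto_dist_div_of_equivSeq hab
      (equivSeq_of_mem_vertexSet hu ha hx) (equivSeq_of_mem_vertexSet hv hb hy)) hL
  rwa [rhoX, hlimits, csSup_singleton]

theorem rhoX_comm (u v : Set (ℕ → X)) : rhoX r u v = rhoX r v u := by
  have swap : ∀ a b : Set (ℕ → X), ∀ L, (∃ x ∈ a, ∃ y ∈ b,
      Tendsto (fun n => dist (x n) (y n) / r n) atTop (𝓝 L)) →
      ∃ y ∈ b, ∃ x ∈ a, Tendsto (fun n => dist (y n) (x n) / r n) atTop (𝓝 L) := by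
    rintro a b L ⟨x, hx, y, hy, h⟩
    exact ⟨y, hy, x, hx, by simpa [dist_comm] using h⟩
  simp only [rhoX]
  congr 1
  ext L
  exact ⟨swap u v L, swap v u L⟩

theorem rhoX_nonneg (hr : ∀ n, 0 ≤ r n) (h : AdjacentCl r p u v) : 0 ≤ rhoX r u v := by
  obtain ⟨x, hx⟩ := nonempty_of_mem_vertexSet h.1
  obtain ⟨y, hy⟩ := nonempty_of_mem_vertexSet h.2.1
  exact ge_of_tendsto' (tendsto_rhoX h hx hy) fun n => div_nonneg dist_nonneg (hr n)

end ClusterGraph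

section RootVertex

variable {X : Type*} [MetricSpace X] {r : ℕ → ℝ} {p : X} {u v : Set (ℕ → X)}

theorem exists_tendsto_atTop_eventually_le (b : ℕ → ℝ) {s : ℕ → ℝ}
    (hs : Tendsto s atTop atTop) :
    ∃ m : ℕ → ℕ, Tendsto m atTop atTop ∧ ∀ᶠ n in atTop, b (m n) ≤ s n := by
  refine ⟨fun n => Nat.findGreatest (fun k => b k ≤ s n) n, tendsto_atTop.2 fun K => ?_, ?_⟩
  · filter_upwards [hs.eventually_ge_atTop (b K), eventually_ge_atTop K] with n hbK hK
    exact Nat.le_findGreatest hK hbK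
  · filter_upwards [hs.eventually_ge_atTop (b 0)] with n hb0
    exact Nat.findGreatest_spec (P := fun k => b k ≤ s n) (Nat.zero_le n) hb0

theorem exists_mem_rootClass (hX : UnboundedSpace X) (hr : ScalingSeq r) (p : X) :
    ∃ z, z ∈ rootClass r p := by
  have hfar : ∀ k : ℕ, ∃ a : X, (k : ℝ) < dist a p := by
    intro k
    by_contra! hnear
    exact hX ((Metric.isBounded_iff_subset_closedBall p).2 ⟨k, fun a _ => hnear a⟩)
  choose a ha using hfar
  -- points at distance at most `√(r n)` from `p` are far away, yet negligible at scale `r n`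
  have hsqrt : Tendsto (fun n => √(r n)) atTop atTop := Real.tendsto_sqrt_atTop.comp hr.2
  obtain ⟨m, hm, hle⟩ := exists_tendsto_atTop_eventually_le (fun k => dist (a k) p) hsqrt
  refine ⟨fun n => a (m n), ?_, ?_⟩
  · exact tendsto_atTop_mono (fun n => (ha (m n)).le) (tendsto_natCast_atTop_atTop.comp hm)
  · refine squeeze_zero' (.of_forall fun n => div_nonneg dist_nonneg (hr.1 n).le) ?_
      (tendsto_inv_atTop_zero.comp hsqrt)
    filter_upwards [hle] with n hn
    calc dist (a (m n)) p / r n ≤ √(r n) / r n := div_le_div_of_nonneg_right hn (hr.1 n).le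
      _ = (√(r n))⁻¹ := by rw [Real.sqrt_div_self', one_div]

theorem adjacentCl_classOf_of_mem_rootClass {z : ℕ → X} (hz : z ∈ rootClass r p)
    (hu : u ∈ VertexSet r p) (hne : u ≠ classOf r p z) : AdjacentCl r p u (classOf r p z) := by
  refine ⟨hu, ⟨z, ⟨hz.1, 0, hz.2⟩, rfl⟩, hne, fun x hx y hy => ?_⟩
  obtain ⟨a, -, rfl⟩ := hu
  obtain ⟨L, hL⟩ := hx.1.2
  have hzp : EquivSeq r z (fun _ => p) := hz.2
  exact ⟨L, tendsto_dist_div_of_equivSeq hL (.refl r x) (hzp.symm.trans hy.2)⟩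

theorem clusterGraph_reachable (hX : UnboundedSpace X) (hr : ScalingSeq r)
    (hu : u ∈ VertexSet r p) (hv : v ∈ VertexSet r p) : (clusterGraph r p).Reachable u v := by
  obtain ⟨z, hz⟩ := exists_mem_rootClass hX hr p
  have hroot : ∀ a ∈ VertexSet r p, (clusterGraph r p).Reachable a (classOf r p z) := by
    intro a ha
    by_cases h : a = classOf r p z
    · exact h ▸ .refl _
    · exact SimpleGraph.Adj.reachable (G := clusterGraph r p)
        (adjacentCl_classOf_of_mem_rootClass hz ha h)
  exact (hroot u hu).trans (hroot v hv).symm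

end RootVertex

section ShortestPathMetric

open SimpleGraph

variable {X : Type*} [MetricSpace X] {r : ℕ → ℝ} {p : X} {u v : Set (ℕ → X)} {x y : ℕ → X}

theorem exists_tendsto_weight_ge_dist_div (hr : ∀ n, 0 ≤ r n) (q : (clusterGraph r p).Walk u v)
    (hu : u ∈ VertexSet r p) (hx : x ∈ u) (hy : y ∈ v) :
    ∃ g : ℕ → ℝ, Tendsto g atTop (𝓝 (q.weight (rhoX r))) ∧
      ∀ n, dist (x n) (y n) / r n ≤ g n := by
  induction q generalizing x with
  | nil =>
    refine ⟨_, ?_, fun n => le_rfl⟩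
    rw [Walk.weight_nil]
    exact equivSeq_of_mem_vertexSet hu hx hy
  | cons h q ih =>
    obtain ⟨z, hz⟩ := nonempty_of_mem_vertexSet h.2.1
    obtain ⟨g, hg, hle⟩ := ih h.2.1 hz hy
    refine ⟨fun n => dist (x n) (z n) / r n + g n, ?_, fun n => ?_⟩
    · rw [Walk.weight_cons]
      exact (tendsto_rhoX h hx hz).add hg
    · calc dist (x n) (y n) / r n ≤ dist (x n) (z n) / r n + dist (z n) (y n) / r n := by
            rw [← add_div]
            exact div_le_div_of_nonneg_right (dist_triangle _ _ _) (hr n)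
        _ ≤ dist (x n) (z n) / r n + g n := add_le_add le_rfl (hle n)

theorem eventually_dist_div_lt_of_spDist_lt (hr : ∀ n, 0 ≤ r n)
    (hreach : (clusterGraph r p).Reachable u v) (hu : u ∈ VertexSet r p) (hx : x ∈ u)
    (hy : y ∈ v) {c : ℝ} (hc : spDist (clusterGraph r p).Adj (rhoX r) u v < c) :
    ∀ᶠ n in atTop, dist (x n) (y n) / r n < c := by
  obtain ⟨q, hq⟩ := hreach.exists_weight_lt hc
  obtain ⟨g, hg, hle⟩ := exists_tendsto_weight_ge_dist_div hr q hu hx hy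
  filter_upwards [hg.eventually_lt_const hq] with n hn
  exact (hle n).trans_lt hn

theorem eq_of_spDist_eq_zero (hr : ∀ n, 0 ≤ r n) (hreach : (clusterGraph r p).Reachable u v)
    (hu : u ∈ VertexSet r p) (hv : v ∈ VertexSet r p)
    (h0 : spDist (clusterGraph r p).Adj (rhoX r) u v = 0) : u = v := by
  obtain ⟨x, hx⟩ := nonempty_of_mem_vertexSet hu
  obtain ⟨y, hy⟩ := nonempty_of_mem_vertexSet hv
  refine eq_of_equivSeq hu hv hx hy (tendsto_order.2 ⟨fun a ha => ?_, fun a ha => ?_⟩)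
  · exact .of_forall fun n => ha.trans_le (div_nonneg dist_nonneg (hr n))
  · exact eventually_dist_div_lt_of_spDist_lt hr hreach hu hx hy (h0 ▸ ha)

theorem spDist_eq_rhoX (hr : ∀ n, 0 ≤ r n) (h : AdjacentCl r p u v) :
    spDist (clusterGraph r p).Adj (rhoX r) u v = rhoX r u v := by
  have hw : ∀ a b, (clusterGraph r p).Adj a b → 0 ≤ rhoX r a b := fun _ _ => rhoX_nonneg hr
  obtain ⟨x, hx⟩ := nonempty_of_mem_vertexSet h.1
  obtain ⟨y, hy⟩ := nonempty_of_mem_vertexSet h.2.1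
  have hG : (clusterGraph r p).Adj u v := h
  refine le_antisymm ?_ (le_of_forall_gt_imp_ge_of_dense fun c hc => ?_)
  · refine (spDist_le_weight hw (Walk.cons hG .nil)).trans_eq ?_
    rw [Walk.weight_cons, Walk.weight_nil, add_zero]
  · exact le_of_tendsto (tendsto_rhoX h hx hy) ((eventually_dist_div_lt_of_spDist_lt hr
      hG.reachable h.1 hx hy hc).mono fun _ => le_of_lt)

end ShortestPathMetric

/-- Proposition p1.4.14. The weighted shortest-path pseudometric
`d*_{ρ_X}` on the vertex set of the weighted cluster `G_{X,r̃}(ρ_X)` is a metric,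
and `G_{X,r̃}(ρ_X)` is metrizable by it. -/
theorem cluster_metrizable_by_shortest_path {X : Type*} [MetricSpace X]
    (hX : UnboundedSpace X) (p : X) (r : ℕ → ℝ) (hr : ScalingSeq r) :
    (∀ u ∈ VertexSet r p, ∀ v ∈ VertexSet r p,
        (spDist (AdjacentCl r p) (rhoX r) u v = 0 ↔ u = v)) ∧
    (∀ u ∈ VertexSet r p, ∀ v ∈ VertexSet r p,
        spDist (AdjacentCl r p) (rhoX r) u v = spDist (AdjacentCl r p) (rhoX r) v u) ∧
    (∀ u ∈ VertexSet r p, ∀ v ∈ VertexSet r p, ∀ z ∈ VertexSet r p,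
        spDist (AdjacentCl r p) (rhoX r) u z ≤
          spDist (AdjacentCl r p) (rhoX r) u v + spDist (AdjacentCl r p) (rhoX r) v z) ∧
    (∀ u v : Set (ℕ → X), AdjacentCl r p u v →
        spDist (AdjacentCl r p) (rhoX r) u v = rhoX r u v) := by
  have hr₀ : ∀ n, 0 ≤ r n := fun n => (hr.1 n).le
  have hw : ∀ a b, (clusterGraph r p).Adj a b → 0 ≤ rhoX r a b := fun _ _ => rhoX_nonneg hr₀
  have hreach : ∀ {u v}, u ∈ VertexSet r p → v ∈ VertexSet r p →
      (clusterGraph r p).Reachable u v := clusterGraph_reachable hX hr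
  exact ⟨fun u hu v hv => ⟨eq_of_spDist_eq_zero hr₀ (hreach hu hv) hu hv,
      fun h => h ▸ spDist_self _ _ u⟩,
    fun u hu v hv => spDist_comm hw rhoX_comm (hreach hu hv),
    fun u hu v hv z hz => spDist_triangle hw (hreach hu hv) (hreach hv hz),
    fun u v h => spDist_eq_rhoX hr₀ h⟩
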